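/- arXiv:cs/0205013 — 2 statements merged into one kernel-verified Lean document; each statement's English description precedes it below -/
import Mathlib

section
/- For every integer t ≥ 2, the polynomial equation x^t = x^{t−1} + x^{t−2} + ⋯ + x + 1 has a largest real root α_t, and this root satisfies 1 < α_t < 2 − 1/2^t; moreover, every real root of this equation is less than 2 − 1/2^t. -/
private lemma root_lt_aux (t : ℕ) (ht : 2 ≤ t) (x : ℝ)
    (h : x ^ t = ∑ i ∈ Finset.range t, x ^ i) : x < 2 - 1 / 2 ^ t := by
  by_contra hx
  push_neg at hx
  have h2t : (1:ℝ) < 2 ^ t := one_lt_pow₀ (by norm_num) (by omega)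
  have hc : (1:ℝ) < 2 - 1 / 2 ^ t := by
    have : (1:ℝ) / 2 ^ t < 1 := by
      rw [div_lt_one (by positivity)]; exact h2t
    linarith
  have hx1 : 1 < x := lt_of_lt_of_le hc hx
  have hmul := geom_sum_mul x t
  rw [← h] at hmul
  have key : x ^ t * (2 - x) = 1 := by ring_nf; ring_nf at hmul; nlinarith [hmul]
  have hxt : (0:ℝ) < x ^ t := by positivity
  rcases lt_or_ge x 2 with h2 | h2
  · have hxlt : x ^ t < 2 ^ t := pow_lt_pow_left₀ h2 (by linarith) (by omega)
    have hle : 2 - x ≤ 1 / 2 ^ t := by linarith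
    have hpos : 0 < 2 - x := by linarith
    have e1 : x ^ t * (2 - x) < 2 ^ t * (2 - x) := mul_lt_mul_of_pos_right hxlt hpos
    have e2 : (2:ℝ) ^ t * (2 - x) ≤ 2 ^ t * (1 / 2 ^ t) :=
      mul_le_mul_of_nonneg_left hle (by positivity)
    have e3 : (2:ℝ) ^ t * (1 / 2 ^ t) = 1 := by
      field_simp
    linarith
  · nlinarith

/-- For every integer `t ≥ 2`, the equation `x^t = x^(t-1) + ⋯ + x + 1` has a
largest real root `a`, which satisfies `1 < a < 2 - 1/2^t`; moreover every
real root of the equation is less than `2 - 1/2^t`. -/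
theorem stmt_8 (t : ℕ) (ht : 2 ≤ t) :
    ∃ a : ℝ, (a ^ t = ∑ i ∈ Finset.range t, a ^ i) ∧
      (∀ x : ℝ, x ^ t = ∑ i ∈ Finset.range t, x ^ i → x ≤ a) ∧
      1 < a ∧ a < 2 - 1 / 2 ^ t ∧
      ∀ x : ℝ, x ^ t = ∑ i ∈ Finset.range t, x ^ i → x < 2 - 1 / 2 ^ t := by
  set S : Set ℝ := {x | x ^ t = ∑ i ∈ Finset.range t, x ^ i} with hS
  have hcont : Continuous fun x : ℝ => x ^ t - ∑ i ∈ Finset.range t, x ^ i := by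
    exact (continuous_pow t).sub (continuous_finset_sum _ fun i _ => continuous_pow i)
  have hclosed : IsClosed S := by
    have : S = (fun x : ℝ => x ^ t - ∑ i ∈ Finset.range t, x ^ i) ⁻¹' {0} := by
      ext x; simp [hS, sub_eq_zero]
    rw [this]; exact isClosed_singleton.preimage hcont
  -- IVT: root in (1,2)
  have hf1 : (1:ℝ) ^ t - ∑ i ∈ Finset.range t, (1:ℝ) ^ i < 0 := by
    simp; exact_mod_cast by omega
  have hf2 : (0:ℝ) < 2 ^ t - ∑ i ∈ Finset.range t, (2:ℝ) ^ i := by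
    have := geom_sum_mul (2:ℝ) t
    nlinarith [this]
  obtain ⟨x₀, hx₀mem, hx₀⟩ := intermediate_value_Ioo (by norm_num : (1:ℝ) ≤ 2)
    hcont.continuousOn (Set.mem_Ioo.mpr ⟨hf1, hf2⟩)
  have hx₀S : x₀ ∈ S := by simpa [hS, sub_eq_zero] using hx₀
  have hne : S.Nonempty := ⟨x₀, hx₀S⟩
  have hbdd : BddAbove S := ⟨2 - 1 / 2 ^ t, fun x hx => (root_lt_aux t ht x hx).le⟩
  have hmem : sSup S ∈ S := hclosed.csSup_mem hne hbdd
  refine ⟨sSup S, hmem, fun x hx => le_csSup hbdd hx, ?_, root_lt_aux t ht _ hmem,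
    root_lt_aux t ht⟩
  exact lt_of_lt_of_le hx₀mem.1 (le_csSup hbdd hx₀S)
end

section
/- Every full collection of permutations of {1, 2, …, n} contains at least binomial(n, ⌊n/2⌋) permutations. -/
/-- A collection `S` of permutations of `Fin n` (representing `{1,…,n}`) is
full if every subset `T` of `Fin n` is a final segment of some permutation in
`S`, i.e. `T` is the image under some `π ∈ S` of the last `|T|` positions.
Every full collection contains at least `n.choose (n/2)` permutations. -/
theorem stmt_19 (n : ℕ) (S : Finset (Equiv.Perm (Fin n)))
    (hfull : ∀ T : Finset (Fin n), ∃ π ∈ S,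
      T = (Finset.univ.filter (fun j : Fin n => n - T.card ≤ (j : ℕ))).image π) :
    n.choose (n / 2) ≤ S.card := by
  classical
  calc n.choose (n / 2)
      = (Finset.univ.powersetCard (n / 2) : Finset (Finset (Fin n))).card := by
        simp [Finset.card_powersetCard]
    _ ≤ S.card := by
        apply Finset.card_le_card_of_injOn (fun T => (hfull T).choose)
        · intro T _
          exact (hfull T).choose_spec.1
        · intro T1 h1 T2 h2 heq
          have c1 : T1.card = n / 2 := (Finset.mem_powersetCard.mp h1).2
          have c2 : T2.card = n / 2 := (Finset.mem_powersetCard.mp h2).2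
          have e1 := (hfull T1).choose_spec.2
          have e2 := (hfull T2).choose_spec.2
          have hf : Finset.filter (fun j : Fin n => n - T1.card ≤ (j : ℕ)) Finset.univ
              = Finset.filter (fun j : Fin n => n - T2.card ≤ (j : ℕ)) Finset.univ := by
            rw [c1, c2]
          simp only at heq
          rw [e1, e2, heq, hf]
end
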